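/- Let a, b : [0,T] → ℝ be continuous, α ≥ 0, β ∈ ℝ, γ > max(β, 0), and suppose a(t) ≥ b(t)²γ/(2(γ-β)) for all t. Consider the Riccati terminal value problem Ṗ(t) + 2a(t)P(t) + α - b(t)²P(t)²/(P(t) - β) = 0, P(T) = γ. Then any C¹ solution P on a subinterval (t₀, T] with P(t) > β on that interval satisfies P(t) ≥ γ for all t ∈ (t₀, T], hence P(t) - β ≥ γ - β > 0. -/

import Mathlib

open Set

set_option maxHeartbeats 1000000 in
theorem riccati_a_priori_lower_bound (T t₀ : ℝ) (ht₀ : 0 ≤ t₀) (ht₀T : t₀ < T)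
    (a b : ℝ → ℝ) (ha : ContinuousOn a (Icc 0 T)) (hb : ContinuousOn b (Icc 0 T))
    (α β γ : ℝ) (hα : 0 ≤ α) (hγ : γ > max β 0)
    (hab : ∀ t ∈ Icc 0 T, a t ≥ (b t) ^ 2 * γ / (2 * (γ - β)))
    (P : ℝ → ℝ)
    (hP : ∀ t ∈ Ioc t₀ T, HasDerivWithinAt P
      (-(2 * a t * P t + α - (b t) ^ 2 * (P t) ^ 2 / (P t - β))) (Ioc t₀ T) t)
    (hPβ : ∀ t ∈ Ioc t₀ T, β < P t)
    (hPT : P T = γ) :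
    ∀ t ∈ Ioc t₀ T, γ ≤ P t ∧ γ - β ≤ P t - β ∧ 0 < γ - β := by
  have hβγ : β < γ := lt_of_le_of_lt (le_max_left β 0) hγ
  have hγ0 : (0:ℝ) < γ := lt_of_le_of_lt (le_max_right β 0) hγ
  have hγβ : 0 < γ - β := sub_pos.2 hβγ
  -- it suffices to prove γ ≤ P t
  suffices H : ∀ t ∈ Ioc t₀ T, γ ≤ P t by
    intro t ht
    exact ⟨H t ht, by linarith [H t ht], hγβ⟩
  -- continuity of P on Ioc t₀ T
  have contP : ContinuousOn P (Ioc t₀ T) := fun u hu => (hP u hu).continuousWithinAt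
  intro t ht
  by_contra hcon
  push_neg at hcon
  have htt₀ : t₀ < t := ht.1
  have htT : t ≤ T := ht.2
  -- subset facts
  have hsub : Icc t T ⊆ Ioc t₀ T := fun u hu => ⟨lt_of_lt_of_le htt₀ hu.1, hu.2⟩
  have contPtT : ContinuousOn P (Icc t T) := contP.mono hsub
  -- the first time ≥ t where P = γ
  set S : Set ℝ := Icc t T ∩ P ⁻¹' {γ} with hS
  have hmemS : ∀ u, u ∈ S ↔ u ∈ Icc t T ∧ P u = γ := by
    intro u; simp [hS]
  have hSclosed : IsClosed S :=
    contPtT.preimage_isClosed_of_isClosed isClosed_Icc isClosed_singleton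
  have hSne : S.Nonempty := ⟨T, (hmemS T).2 ⟨⟨htT, le_refl T⟩, hPT⟩⟩
  have hSbdd : BddBelow S := ⟨t, fun u hu => ((hmemS u).1 hu).1.1⟩
  set s := sInf S with hs
  have hsmem : s ∈ Icc t T ∧ P s = γ := (hmemS s).1 (hSclosed.csInf_mem hSne hSbdd)
  have hts : t ≤ s := hsmem.1.1
  have hsT : s ≤ T := hsmem.1.2
  have hPs : P s = γ := hsmem.2
  have hts' : t < s := by
    rcases lt_or_eq_of_le hts with h | h
    · exact h
    · exfalso; rw [← h] at hPs; linarith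
  have hsubts : Icc t s ⊆ Ioc t₀ T := fun u hu =>
    ⟨lt_of_lt_of_le htt₀ hu.1, le_trans hu.2 hsT⟩
  have contPts : ContinuousOn P (Icc t s) := contP.mono hsubts
  -- P < γ on [t, s)
  have hPlt : ∀ u ∈ Ico t s, P u < γ := by
    intro u hu
    have huS : u ∉ S := fun h => absurd (csInf_le hSbdd h) (not_le.2 hu.2)
    have huIcc : u ∈ Icc t T := ⟨hu.1, le_trans hu.2.le hsT⟩
    rcases lt_trichotomy (P u) γ with h | h | h
    · exact h
    · exact absurd ((hmemS u).2 ⟨huIcc, h⟩) huS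
    · -- IVT between t and u gives a point in S below s, contradiction
      exfalso
      have hcont : ContinuousOn P (Icc t u) :=
        contPts.mono (Icc_subset_Icc le_rfl hu.2.le)
      have : γ ∈ Icc (P t) (P u) := ⟨hcon.le, h.le⟩
      obtain ⟨v, hv, hPv⟩ := intermediate_value_Icc hu.1 hcont this
      have hvS : v ∈ S := (hmemS v).2 ⟨⟨hv.1, le_trans (le_trans hv.2 hu.2.le) hsT⟩, hPv⟩
      have : s ≤ v := csInf_le hSbdd hvS
      have : v < s := lt_of_le_of_lt hv.2 hu.2
      linarith
  -- P ≤ γ on [t, s]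
  have hPle : ∀ u ∈ Icc t s, P u ≤ γ := by
    intro u hu
    rcases lt_or_eq_of_le hu.2 with h | h
    · exact (hPlt u ⟨hu.1, h⟩).le
    · rw [h, hPs]
  -- positive lower bound on P - β on [t,s]
  obtain ⟨u₀, hu₀mem, hu₀min⟩ :=
    isCompact_Icc.exists_isMinOn (nonempty_Icc.2 hts'.le) contPts
  set δ := P u₀ - β with hδ
  have hδpos : 0 < δ := sub_pos.2 (hPβ u₀ (hsubts hu₀mem))
  have hPδ : ∀ u ∈ Icc t s, β + δ ≤ P u := by
    intro u hu
    have := isMinOn_iff.1 hu₀min u hu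
    simp only [hδ]; linarith [this]
  -- bounds on a and b on [0, T]
  obtain ⟨A, hA⟩ := isCompact_Icc.exists_bound_of_continuousOn ha
  obtain ⟨B, hB⟩ := isCompact_Icc.exists_bound_of_continuousOn hb
  have hIccT : Icc t s ⊆ Icc 0 T := fun u hu =>
    ⟨le_trans ht₀ (le_trans htt₀.le hu.1), le_trans hu.2 hsT⟩
  -- the Lipschitz-type constant
  set N : ℝ := (γ - β) * (|β| + γ) + |β| * γ with hN
  have hNpos : 0 ≤ N := by positivity
  set K : ℝ := 2 * A + B ^ 2 * N / (δ * (γ - β)) with hK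
  -- the derivative value
  set F : ℝ → ℝ := fun u => -(2 * a u * P u + α - (b u) ^ 2 * (P u) ^ 2 / (P u - β)) with hF
  -- key inequality: F u ≤ K * (γ - P u) on [t,s]
  have key : ∀ u ∈ Icc t s, F u ≤ K * (γ - P u) := by
    intro u hu
    have hu0T : u ∈ Icc 0 T := hIccT hu
    have hx1 : β + δ ≤ P u := hPδ u hu
    have hx2 : P u ≤ γ := hPle u hu
    have hxβ : 0 < P u - β := by linarith
    have haA : |a u| ≤ A := hA u hu0T
    have hbB : |b u| ≤ B := hB u hu0T
    have hB0 : 0 ≤ B := le_trans (abs_nonneg _) hbB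
    have hb2 : (b u) ^ 2 ≤ B ^ 2 := by
      have := sq_abs (b u); nlinarith [abs_nonneg (b u)]
    set x := P u with hxdef
    -- F u = Fγ + (γ - x) * Br
    set Fγ : ℝ := -(2 * a u * γ + α - (b u) ^ 2 * γ ^ 2 / (γ - β)) with hFγ
    set Br : ℝ := 2 * a u - (b u) ^ 2 * ((γ - β) * x - β * γ) / ((x - β) * (γ - β)) with hBr
    have hid : F u = Fγ + (γ - x) * Br := by
      have hne : x - β ≠ 0 := hxβ.ne'
      have hne2 : γ - β ≠ 0 := hγβ.ne'
      simp only [hF, hFγ, hBr, ← hxdef]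
      field_simp
      ring
    -- Fγ ≤ 0
    have hFγ0 : Fγ ≤ 0 := by
      have h1 : (b u) ^ 2 * γ ≤ a u * (2 * (γ - β)) :=
        (div_le_iff₀ (by positivity : (0:ℝ) < 2 * (γ - β))).1 (hab u hu0T)
      have h2 : (b u) ^ 2 * γ ^ 2 / (γ - β) ≤ 2 * a u * γ := by
        rw [div_le_iff₀ hγβ]
        nlinarith [h1, hγ0]
      simp only [hFγ]; linarith
    -- Br ≤ K
    have hBrK : Br ≤ K := by
      have hxabs : |x| ≤ |β| + γ := by
        rw [abs_le]; constructor
        · have : -|β| ≤ β := neg_abs_le β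
          linarith
        · linarith [abs_nonneg β]
      have hMabs : |(γ - β) * x - β * γ| ≤ N := by
        calc |(γ - β) * x - β * γ| ≤ |(γ - β) * x| + |β * γ| := abs_sub _ _
          _ = (γ - β) * |x| + |β| * γ := by
              rw [abs_mul, abs_mul, abs_of_pos hγβ, abs_of_pos hγ0]
          _ ≤ N := by
              simp only [hN]
              have : (γ - β) * |x| ≤ (γ - β) * (|β| + γ) :=
                mul_le_mul_of_nonneg_left hxabs hγβ.le
              linarith
      have hDen : δ * (γ - β) ≤ (x - β) * (γ - β) := by
        apply mul_le_mul_of_nonneg_right _ hγβ.le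
        linarith
      have hDenpos : 0 < δ * (γ - β) := by positivity
      have hterm : -((b u) ^ 2 * ((γ - β) * x - β * γ) / ((x - β) * (γ - β)))
          ≤ B ^ 2 * N / (δ * (γ - β)) := by
        obtain ⟨M, hM⟩ : ∃ M : ℝ, M = (γ - β) * x - β * γ := ⟨_, rfl⟩
        rw [← hM] at hMabs ⊢
        have e1 : (b u) ^ 2 * (-M) ≤ (b u) ^ 2 * |M| :=
          mul_le_mul_of_nonneg_left (neg_le_abs M) (sq_nonneg _)
        have e2 : (b u) ^ 2 * |M| ≤ (b u) ^ 2 * N :=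
          mul_le_mul_of_nonneg_left hMabs (sq_nonneg _)
        have e3 : (b u) ^ 2 * N ≤ B ^ 2 * N :=
          mul_le_mul_of_nonneg_right hb2 hNpos
        have h1 : -((b u) ^ 2 * M) ≤ B ^ 2 * N := by
          have : -((b u) ^ 2 * M) = (b u) ^ 2 * (-M) := by ring
          linarith [e1, e2, e3, this.le, this.ge]
        calc -((b u) ^ 2 * M / ((x - β) * (γ - β)))
            = -((b u) ^ 2 * M) / ((x - β) * (γ - β)) := by ring
          _ ≤ B ^ 2 * N / (δ * (γ - β)) :=
              div_le_div₀ (by positivity) h1 hDenpos hDen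
      have haA' : 2 * a u ≤ 2 * A := by
        have := le_abs_self (a u); linarith
      simp only [hBr, hK]
      linarith [hterm]
    -- combine
    rw [hid]
    have : (γ - x) * Br ≤ (γ - x) * K :=
      mul_le_mul_of_nonneg_left hBrK (by linarith)
    calc Fγ + (γ - x) * Br ≤ 0 + (γ - x) * K := by linarith
      _ = K * (γ - x) := by ring
  -- time-reversed function w r = γ - P (t + s - r)
  set σ : ℝ → ℝ := fun r => t + s - r with hσ
  set w : ℝ → ℝ := fun r => γ - P (σ r) with hw
  have hσmaps : MapsTo σ (Icc t s) (Icc t s) := by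
    intro r hr
    simp only [mem_Icc] at hr ⊢
    exact ⟨by simp only [hσ]; linarith [hr.1, hr.2], by simp only [hσ]; linarith [hr.1, hr.2]⟩
  have hwcont : ContinuousOn w (Icc t s) := by
    apply ContinuousOn.sub continuousOn_const
    exact contPts.comp (by fun_prop) hσmaps
  have hwderiv : ∀ r ∈ Ico t s, HasDerivWithinAt w (F (σ r)) (Ici r) r := by
    intro r hr
    have hσr : σ r ∈ Icc t s := hσmaps ⟨hr.1, hr.2.le⟩
    have hPder : HasDerivWithinAt P (F (σ r)) (Ioc t₀ T) (σ r) := hP (σ r) (hsubts hσr)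
    have hσder : HasDerivWithinAt σ (-1) (Icc t s) r := by
      have : HasDerivAt σ (-1) r := by
        simpa using (hasDerivAt_id r).const_sub (t + s)
      exact this.hasDerivWithinAt
    have hcomp : HasDerivWithinAt (P ∘ σ) (F (σ r) * (-1)) (Icc t s) r :=
      hPder.comp r hσder (hσmaps.mono_right hsubts)
    have hwIcc : HasDerivWithinAt w (F (σ r)) (Icc t s) r := by
      have := hcomp.const_sub γ
      simpa [hw, mul_comm] using this
    exact hwIcc.mono_of_mem_nhdsWithin (Icc_mem_nhdsGE_of_mem ⟨hr.1, hr.2⟩)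
  -- Grönwall
  have hgron := le_gronwallBound_of_liminf_deriv_right_le (f := w) (f' := fun r => F (σ r))
    (δ := 0) (K := K) (ε := 0) (a := t) (b := s) hwcont
    (fun r hr _ hrlt => (hwderiv r hr).liminf_right_slope_le hrlt)
    (by simp [hw, hσ, hPs])
    (by
      intro r hr
      have hσr : σ r ∈ Icc t s := hσmaps ⟨hr.1, hr.2.le⟩
      have := key (σ r) hσr
      simp only [hw]
      linarith)
  have hws := hgron s ⟨hts'.le, le_rfl⟩
  rw [gronwallBound_ε0_δ0] at hws
  have : w s = γ - P t := by simp [hw, hσ]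
  rw [this] at hws
  linarith
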